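/- (Weight-zero case of the paper's Lemma computing the restriction of the p-saturated filtration.) For all n ≥ 0 and r ≥ 1, the image of Fil^p_r W_{n+1}(L) under the n-fold restriction Rⁿ : W_{n+1}(L) → W_1(L) = L (i.e. the set of 0-th components a_0 of elements of Fil^p_r W_{n+1}(L)) equals: 𝔪^{−⌈r/pⁿ⌉+1} = {a ∈ L : v(a) ≥ 1 − ⌈r/pⁿ⌉} if v_p(r) ≤ n, and 𝔪^{−r/pⁿ} = {a ∈ L : v(a) ≥ −r/pⁿ} if v_p(r) ≥ n+1 (here ⌈·⌉ is the ceiling and v_p(r) the p-adic valuation of r). -/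

import Mathlib

noncomputable section

open scoped Classical

/-- A discretely valued field: a field `L` together with a normalized additive valuation
`v : L → ℤ ∪ {∞}` and a uniformizer `z` (so `v z = 1`).  The valuation ring is
`O = {a : L | 0 ≤ v a}`, with maximal ideal `𝔪 = {a : L | 1 ≤ v a}`. -/
structure DVField (L : Type) [Field L] : Type where
  v : L → WithTop ℤ
  z : L
  v_top : ∀ a : L, v a = ⊤ ↔ a = 0
  v_mul : ∀ a b : L, v (a * b) = v a + v b
  v_add : ∀ a b : L, min (v a) (v b) ≤ v (a + b)
  v_z : v z = 1

namespace DVField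

variable {L : Type} [Field L]

/-- `Wₙ(O) ⊆ Wₙ(L)`: the truncated Witt vectors all of whose components are integral. -/
def WO (D : DVField L) (p n : ℕ) : Set (TruncatedWittVector p n L) :=
  {x | ∀ i : Fin n, 0 ≤ D.v (x.coeff i)}

/-- The Brylinski–Kato filtration
`fil^log_r Wₙ(L) = {(a₀, …, a_{n-1}) | p^{n-1-i} · v(aᵢ) ≥ -r for all i}`. -/
def filLog (D : DVField L) (p r n : ℕ) : Set (TruncatedWittVector p n L) :=
  {x | ∀ i : Fin n, (↑(-(r : ℤ)) : WithTop ℤ) ≤ p ^ (n - 1 - (i : ℕ)) • D.v (x.coeff i)}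

end DVField

/-- The Verschiebung `V : Wₙ(L) → W_{n+1}(L)`, shifting components. -/
def wV {p : ℕ} {L : Type} [Field L] {n : ℕ} (x : TruncatedWittVector p n L) :
    TruncatedWittVector p (n + 1) L :=
  TruncatedWittVector.mk p fun i =>
    if h : (i : ℕ) = 0 then 0 else x.coeff ⟨(i : ℕ) - 1, by have := i.isLt; omega⟩

/-- The iterated Verschiebung `V^{n-m} : W_m(L) → Wₙ(L)` (for `m ≤ n`), given by shifting
components by `n - m`. -/
def wVit {p : ℕ} {L : Type} [Field L] {m n : ℕ} (x : TruncatedWittVector p m L) :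
    TruncatedWittVector p n L :=
  TruncatedWittVector.mk p fun i =>
    if h : n - m ≤ (i : ℕ) ∧ (i : ℕ) - (n - m) < m then x.coeff ⟨(i : ℕ) - (n - m), h.2⟩ else 0

/-- The restriction `R : W_{n+1}(L) → Wₙ(L)`, dropping the last component. -/
def wR {p : ℕ} {L : Type} [Field L] {n : ℕ} (x : TruncatedWittVector p (n + 1) L) :
    TruncatedWittVector p n L :=
  TruncatedWittVector.mk p fun i => x.coeff i.castSucc

/-- The iterated restriction `R^{m-n} : W_m(L) → Wₙ(L)` (for `n ≤ m`), keeping the first `n`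
components. -/
def wRes {p : ℕ} {L : Type} [Field L] {m n : ℕ} (x : TruncatedWittVector p m L) :
    TruncatedWittVector p n L :=
  TruncatedWittVector.mk p fun i => if h : (i : ℕ) < m then x.coeff ⟨(i : ℕ), h⟩ else 0

/-- The Frobenius `F : W_{n+1}(L) → Wₙ(L)` in characteristic `p`:
componentwise `p`-th power followed by restriction. -/
def wF {p : ℕ} {L : Type} [Field L] {n : ℕ} (x : TruncatedWittVector p (n + 1) L) :
    TruncatedWittVector p n L :=
  TruncatedWittVector.mk p fun i => x.coeff i.castSucc ^ p

/-- The Teichmüller lift `[a] = (a, 0, …, 0)`. -/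
def wT (p : ℕ) {L : Type} [Field L] (n : ℕ) (a : L) : TruncatedWittVector p n L :=
  TruncatedWittVector.mk p fun i => if (i : ℕ) = 0 then a else 0

/-- The map `p̲ : Wₙ(L) → W_{n+1}(L)`: lift to length `n+1` (by appending a zero component)
and multiply by `p`. -/
def wP {p : ℕ} [Fact p.Prime] {L : Type} [Field L] {n : ℕ} (x : TruncatedWittVector p n L) :
    TruncatedWittVector p (n + 1) L :=
  p • (wRes x : TruncatedWittVector p (n + 1) L)

namespace DVField

variable {L : Type} [Field L]

/-- The Kato–Matsuda filtration
`fil_r Wₙ(L) = fil^log_{r-1} Wₙ(L) + V^{n-m}(fil^log_r W_m(L))` where `m = min(v_p(r), n)`,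
and `fil_0 Wₙ(L) = Wₙ(O)`. -/
def filKM (D : DVField L) (p : ℕ) [Fact p.Prime] (r n : ℕ) :
    Set (TruncatedWittVector p n L) :=
  if r = 0 then D.WO p n
  else {x | ∃ a ∈ D.filLog p (r - 1) n,
    ∃ b ∈ D.filLog p r (min (padicValNat p r) n), x = a + wVit b}

/-- The `p`-saturation `Fil^p_r Wₙ(L) = Σ_{s=0}^{n-1} p^s · fil_{r·p^s} Wₙ(L)`. -/
def FilP (D : DVField L) (p : ℕ) [Fact p.Prime] (r n : ℕ) :
    Set (TruncatedWittVector p n L) :=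
  {x | ∃ f : Fin n → TruncatedWittVector p n L,
      (∀ s : Fin n, f s ∈ D.filKM p (r * p ^ (s : ℕ)) n) ∧
      x = ∑ s : Fin n, p ^ (s : ℕ) • f s}

end DVField

/-!
The `0`-th Witt component is additive and kills `p • x` in characteristic `p`, so of the
summands `p^s · fil_{r p^s}` of `Fil^p_r W_{n+1}(L)` only `fil_r W_{n+1}(L)` is seen by `Rⁿ`.
On `fil^log_t W_{n+1}(L)` the condition on `a₀` is `pⁿ v(a₀) ≥ -t`, i.e. `v(a₀) ≥ -⌊t/pⁿ⌋`,
and Teichmüller lifts show that every such `a₀` occurs. The Verschiebung part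
`V^{n+1-m} fil^log_r W_m(L)` of `fil_r` reaches the `0`-th component only if `m = n+1`, i.e.
`v_p(r) > n`; it then contributes `𝔪^{-⌊r/pⁿ⌋} ⊇ 𝔪^{-⌊(r-1)/pⁿ⌋}`. Otherwise the image is
`𝔪^{-⌊(r-1)/pⁿ⌋} = 𝔪^{1-⌈r/pⁿ⌉}`.
-/

namespace TruncatedWittVector

variable {p : ℕ} [Fact p.Prime] {R : Type*} [CommRing R] {n : ℕ}

theorem add_coeff_zero (x y : TruncatedWittVector p (n + 1) R) :
    (x + y).coeff 0 = x.coeff 0 + y.coeff 0 := by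
  obtain ⟨a, rfl⟩ := WittVector.truncate_surjective p (n + 1) R x
  obtain ⟨b, rfl⟩ := WittVector.truncate_surjective p (n + 1) R y
  simp only [← map_add, WittVector.coeff_truncate, Fin.val_zero, WittVector.add_coeff_zero]

def coeffZeroAddHom : TruncatedWittVector p (n + 1) R →+ R :=
  AddMonoidHom.mk' (coeff 0) add_coeff_zero

theorem coeffZeroAddHom_apply (x : TruncatedWittVector p (n + 1) R) :
    coeffZeroAddHom x = x.coeff 0 :=
  rfl

theorem pow_nsmul_coeff_zero [CharP R p] {s : ℕ} (hs : s ≠ 0)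
    (x : TruncatedWittVector p (n + 1) R) : (p ^ s • x).coeff 0 = 0 := by
  rw [← coeffZeroAddHom_apply, map_nsmul, nsmul_eq_mul, Nat.cast_pow, CharP.cast_eq_zero,
    zero_pow hs, zero_mul]

theorem sum_pow_nsmul_coeff_zero [CharP R p] (f : Fin (n + 1) → TruncatedWittVector p (n + 1) R) :
    (∑ s : Fin (n + 1), p ^ (s : ℕ) • f s).coeff 0 = (f 0).coeff 0 := by
  rw [← coeffZeroAddHom_apply, map_sum, Fin.sum_univ_succ, Finset.sum_eq_zero fun s _ ↦ by
    rw [coeffZeroAddHom_apply, pow_nsmul_coeff_zero (by simp)]]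
  simp only [Fin.val_zero, pow_zero, one_smul, add_zero, coeffZeroAddHom_apply]

end TruncatedWittVector

open TruncatedWittVector

section WittOperations

variable {p : ℕ} {L : Type} [Field L]

theorem wVit_zero [Fact p.Prime] {m n : ℕ} :
    wVit (0 : TruncatedWittVector p m L) = (0 : TruncatedWittVector p n L) :=
  TruncatedWittVector.ext fun i ↦ by
    simp only [wVit, coeff_mk, coeff_zero, dite_eq_ite, ite_self]

theorem wVit_coeff_zero_of_le {m n : ℕ} (hm : m ≤ n) (b : TruncatedWittVector p m L) :
    (wVit b : TruncatedWittVector p (n + 1) L).coeff 0 = 0 := by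
  rw [wVit, coeff_mk, dif_neg]
  simp only [Fin.val_zero, not_and]
  omega

theorem wVit_coeff_zero_self {n : ℕ} (b : TruncatedWittVector p (n + 1) L) :
    (wVit b : TruncatedWittVector p (n + 1) L).coeff 0 = b.coeff 0 := by
  rw [wVit, coeff_mk, dif_pos (by simp)]
  simp

theorem wT_coeff_zero (n : ℕ) (a : L) : (wT p (n + 1) a).coeff 0 = a := by
  simp [wT, coeff_mk]

end WittOperations

theorem WithTop.nsmul_top_of_ne_zero {α : Type*} [AddMonoid α] {P : ℕ} (hP : P ≠ 0) :
    P • (⊤ : WithTop α) = ⊤ := by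
  obtain ⟨k, rfl⟩ := Nat.exists_eq_succ_of_ne_zero hP
  rw [succ_nsmul, WithTop.add_top]

theorem WithTop.neg_le_nsmul_iff_neg_div_le {P : ℕ} (hP : 0 < P) (t : ℕ) (x : WithTop ℤ) :
    ((-(t : ℤ) : ℤ) : WithTop ℤ) ≤ P • x ↔ ((-((t / P : ℕ) : ℤ) : ℤ) : WithTop ℤ) ≤ x := by
  induction x using WithTop.recTopCoe with
  | top => simp [WithTop.nsmul_top_of_ne_zero hP.ne']
  | coe k =>
    rw [← WithTop.coe_nsmul, WithTop.coe_le_coe, WithTop.coe_le_coe, nsmul_eq_mul,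
      Int.natCast_ediv, neg_le (a := (t : ℤ) / P), Int.le_ediv_iff_mul_le (by positivity)]
    constructor <;> intro h <;> linarith

namespace DVField

variable {L : Type} [Field L] (D : DVField L)

/-- The fractional ideal `𝔪^k` of `L`. -/
def maxIdealPow (k : ℤ) : Set L :=
  {a | (k : WithTop ℤ) ≤ D.v a}

theorem v_zero : D.v 0 = ⊤ :=
  (D.v_top 0).mpr rfl

theorem maxIdealPow_anti {j k : ℤ} (h : j ≤ k) : D.maxIdealPow k ⊆ D.maxIdealPow j :=
  fun _ ha ↦ le_trans (WithTop.coe_le_coe.mpr h) ha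

theorem add_mem_maxIdealPow {k : ℤ} {a b : L} (ha : a ∈ D.maxIdealPow k)
    (hb : b ∈ D.maxIdealPow k) : a + b ∈ D.maxIdealPow k :=
  le_trans (le_min ha hb) (D.v_add a b)

variable {p : ℕ}

theorem zero_mem_filLog [hp : Fact p.Prime] (t n : ℕ) : 0 ∈ D.filLog p t n := fun i ↦ by
  rw [coeff_zero, v_zero, WithTop.nsmul_top_of_ne_zero (pow_ne_zero _ hp.out.ne_zero)]
  exact le_top

theorem coeff_zero_mem_of_mem_filLog (hp : p ≠ 0) {t n : ℕ}
    {x : TruncatedWittVector p (n + 1) L} (hx : x ∈ D.filLog p t (n + 1)) :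
    x.coeff 0 ∈ D.maxIdealPow (-((t / p ^ n : ℕ) : ℤ)) := by
  have h0 := hx 0
  rwa [Fin.val_zero, Nat.add_sub_cancel, Nat.sub_zero,
    WithTop.neg_le_nsmul_iff_neg_div_le (pow_pos (Nat.pos_of_ne_zero hp) n)] at h0

theorem wT_mem_filLog (hp : p ≠ 0) {t n : ℕ} {c : L}
    (hc : c ∈ D.maxIdealPow (-((t / p ^ n : ℕ) : ℤ))) : wT p (n + 1) c ∈ D.filLog p t (n + 1) := by
  intro i
  rw [wT, coeff_mk]
  split_ifs with hi
  · rwa [hi, Nat.add_sub_cancel, Nat.sub_zero,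
      WithTop.neg_le_nsmul_iff_neg_div_le (pow_pos (Nat.pos_of_ne_zero hp) n)]
  · rw [v_zero, WithTop.nsmul_top_of_ne_zero (pow_ne_zero _ hp)]
    exact le_top

theorem image_coeff_zero_filLog (hp : p ≠ 0) (t n : ℕ) :
    coeff 0 '' D.filLog p t (n + 1) = D.maxIdealPow (-((t / p ^ n : ℕ) : ℤ)) :=
  Set.Subset.antisymm (Set.image_subset_iff.mpr fun _ hx ↦ D.coeff_zero_mem_of_mem_filLog hp hx)
    fun c hc ↦ ⟨wT p (n + 1) c, D.wT_mem_filLog hp hc, wT_coeff_zero n c⟩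

variable [Fact p.Prime]

theorem zero_mem_filKM (r n : ℕ) : 0 ∈ D.filKM p r n := by
  rw [filKM]
  split_ifs
  · exact fun i ↦ by simp [coeff_zero, v_zero]
  · exact ⟨0, D.zero_mem_filLog _ _, 0, D.zero_mem_filLog _ _, by rw [wVit_zero, add_zero]⟩

theorem image_coeff_zero_filKM_of_le {r n : ℕ} (hr : r ≠ 0) (h : padicValNat p r ≤ n) :
    coeff 0 '' D.filKM p r (n + 1) = D.maxIdealPow (-(((r - 1) / p ^ n : ℕ) : ℤ)) := by
  rw [← D.image_coeff_zero_filLog (Fact.out : p.Prime).ne_zero, filKM, if_neg hr]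
  ext c
  constructor
  · rintro ⟨_, ⟨a, ha, b, -, rfl⟩, rfl⟩
    exact ⟨a, ha, by rw [add_coeff_zero, wVit_coeff_zero_of_le (min_le_of_left_le h), add_zero]⟩
  · rintro ⟨a, ha, rfl⟩
    exact ⟨a, ⟨a, ha, 0, D.zero_mem_filLog _ _, by rw [wVit_zero, add_zero]⟩, rfl⟩

theorem image_coeff_zero_filKM_of_lt {r n : ℕ} (hr : r ≠ 0) (h : n < padicValNat p r) :
    coeff 0 '' D.filKM p r (n + 1) = D.maxIdealPow (-((r / p ^ n : ℕ) : ℤ)) := by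
  have hp : p ≠ 0 := (Fact.out : p.Prime).ne_zero
  have hm : min (padicValNat p r) (n + 1) = n + 1 := min_eq_right h
  rw [filKM, if_neg hr, hm]
  apply Set.Subset.antisymm
  · rintro _ ⟨_, ⟨a, ha, b, hb, rfl⟩, rfl⟩
    have hdiv : (((r - 1) / p ^ n : ℕ) : ℤ) ≤ ((r / p ^ n : ℕ) : ℤ) :=
      Nat.cast_le.mpr (Nat.div_le_div_right (Nat.sub_le r 1))
    rw [add_coeff_zero, wVit_coeff_zero_self]
    exact D.add_mem_maxIdealPow (D.maxIdealPow_anti (neg_le_neg hdiv)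
      (D.coeff_zero_mem_of_mem_filLog hp ha)) (D.coeff_zero_mem_of_mem_filLog hp hb)
  · intro c hc
    exact ⟨wVit (wT p (n + 1) c), ⟨0, D.zero_mem_filLog _ _, wT p (n + 1) c,
      D.wT_mem_filLog hp hc, (zero_add _).symm⟩, by rw [wVit_coeff_zero_self, wT_coeff_zero]⟩

theorem image_coeff_zero_FilP [CharP L p] (r n : ℕ) :
    coeff 0 '' D.FilP p r (n + 1) = coeff 0 '' D.filKM p r (n + 1) := by
  apply Set.Subset.antisymm
  · rintro _ ⟨_, ⟨f, hf, rfl⟩, rfl⟩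
    exact ⟨f 0, by simpa using hf 0, (sum_pow_nsmul_coeff_zero f).symm⟩
  · rintro _ ⟨y, hy, rfl⟩
    refine ⟨_, ⟨Pi.single 0 y, fun s ↦ ?_, rfl⟩,
      by rw [sum_pow_nsmul_coeff_zero, Pi.single_eq_same]⟩
    rcases eq_or_ne s 0 with rfl | hs
    · simpa using hy
    · rw [Pi.single_eq_of_ne hs]
      exact D.zero_mem_filKM _ _

end DVField

/-- (Weight-zero restriction of the `p`-saturated filtration.)  For all
`n ≥ 0` and `r ≥ 1`, the image of `Fil^p_r W_{n+1}(L)` under `Rⁿ : W_{n+1}(L) → W₁(L) = L`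
(the set of `0`-th components) equals `𝔪^{-⌈r/pⁿ⌉+1}` if `v_p(r) ≤ n`, and `𝔪^{-r/pⁿ}` if
`v_p(r) ≥ n+1`.  (Here `⌈r/pⁿ⌉ = (r + pⁿ - 1)/pⁿ` as natural numbers.) -/
theorem statement8 (p : ℕ) [Fact p.Prime] (L : Type) [Field L] [CharP L p]
    (D : DVField L) (n r : ℕ) (hr : 1 ≤ r) :
    {a : L | ∃ x ∈ D.FilP p r (n + 1), x.coeff (0 : Fin (n + 1)) = a} =
      if padicValNat p r ≤ n then
        {a : L | (↑(1 - (((r + p ^ n - 1) / p ^ n : ℕ) : ℤ)) : WithTop ℤ) ≤ D.v a}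
      else
        {a : L | (↑(-((r / p ^ n : ℕ) : ℤ)) : WithTop ℤ) ≤ D.v a} := by
  have hr0 : r ≠ 0 := Nat.one_le_iff_ne_zero.mp hr
  change coeff 0 '' D.FilP p r (n + 1) = _
  rw [D.image_coeff_zero_FilP]
  split_ifs with h
  · have hceil : (1 - (((r + p ^ n - 1) / p ^ n : ℕ) : ℤ)) = -(((r - 1) / p ^ n : ℕ) : ℤ) := by
      rw [show r + p ^ n - 1 = r - 1 + p ^ n by omega,
        Nat.add_div_right _ (pow_pos (Fact.out : p.Prime).pos n)]
      push_cast
      ring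
    rw [D.image_coeff_zero_filKM_of_le hr0 h, hceil]
    rfl
  · exact D.image_coeff_zero_filKM_of_lt hr0 (not_le.mp h)
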